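/- Let (F, W, ≻) be a many-to-many matching market in which every agent's preference is substitutable and satisfies the law of aggregate demand (LAD), let h be a stable matching rule, let f ∈ F be a firm, and let μ be a stable matching for (F, W, ≻). Define ≻''_f = ≻_f |_{μ(f)} and ≻'' = (≻_{-f}, ≻''_f). Then h(≻'')(f) = μ(f). -/

import Mathlib

/-!
Common framework for many-to-many matching markets (Manasero–Oviedo,
"General Manipulability Theorem for a Matching Model").

Agents on each side have strict linear orders (strict total orders) over
finsets of the other side.  `Pref.Ch` is the choice function, selecting the
most preferred subset.
-/

/-- A strict preference of an agent over subsets of the (finite) set `α` of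
potential partners: a strict total order on `Finset α`, where `gt S T` means
`S` is strictly preferred to `T`. -/
structure Pref (α : Type*) [DecidableEq α] [Fintype α] where
  gt : Finset α → Finset α → Prop
  isSTO : IsStrictTotalOrder (Finset α) gt

namespace Pref

variable {α : Type*} [DecidableEq α] [Fintype α]

/-- The choice set `Ch(S, ≻)`: the `≻`-maximal subset of `S`. -/
noncomputable def Ch (p : Pref α) (S : Finset α) : Finset α := by
  classical
  haveI := p.isSTO
  haveI : IsStrictTotalOrder (Finset α) (Function.swap p.gt) := IsStrictTotalOrder.swap _
  exact @Finset.max' _ (linearOrderOfSTO (Function.swap p.gt)) S.powerset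
    ⟨∅, Finset.empty_mem_powerset S⟩

/-- Substitutability: if `w ∈ Ch(S)` then `w ∈ Ch(S \ {w'})` for any other `w' ∈ S`. -/
def Substitutable (p : Pref α) : Prop :=
  ∀ (S : Finset α) (w w' : α), w ∈ S → w' ∈ S → w ≠ w' →
    w ∈ p.Ch S → w ∈ p.Ch (S.erase w')

/-- Law of aggregate demand: `Y ⊆ X` implies `|Ch(Y)| ≤ |Ch(X)|`. -/
def LAD (p : Pref α) : Prop :=
  ∀ Y X : Finset α, Y ⊆ X → (p.Ch Y).card ≤ (p.Ch X).card

/-- `p.HasList L` : the sets in `L` are exactly the acceptable sets, in strictly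
decreasing order of preference and all preferred to `∅`; any set not in the
list (other than `∅`) is unacceptable, i.e. worse than `∅`. -/
def HasList (p : Pref α) (L : List (Finset α)) : Prop :=
  List.Chain' p.gt (L ++ [∅]) ∧ ∀ S : Finset α, S ∉ L → S ≠ ∅ → p.gt ∅ S

/-- `q`-separability of a preference with quota `q`. -/
def QSeparable (p : Pref α) (q : ℕ) : Prop :=
  (∀ S : Finset α, q < S.card → p.gt ∅ S) ∧
  (∀ (S : Finset α) (v : α), v ∉ S → S.card < q → (p.gt (insert v S) S ↔ p.gt {v} ∅))

end Pref

/-- `p'` is the restriction `p |_T` of `p` to `T`: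
(i) any set not contained in `T` is worse than `∅`;
(ii) for `S ⊆ T`, `S ≻' ∅ ↔ S ≻ ∅`;
(iii) for `S, S' ⊆ T`, `S ≻' S' ↔ S ≻ S'`. -/
def IsRestriction {α : Type*} [DecidableEq α] [Fintype α]
    (p : Pref α) (T : Finset α) (p' : Pref α) : Prop :=
  (∀ S : Finset α, ¬ S ⊆ T → p'.gt ∅ S) ∧
  (∀ S : Finset α, S ⊆ T → (p'.gt S ∅ ↔ p.gt S ∅)) ∧
  (∀ S S' : Finset α, S ⊆ T → S' ⊆ T → (p'.gt S S' ↔ p.gt S S'))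

variable (F W : Type*) [DecidableEq F] [Fintype F] [DecidableEq W] [Fintype W]

/-- A (many-to-many) matching between firms `F` and workers `W`. -/
structure Matching where
  fm : F → Finset W
  wm : W → Finset F
  compat : ∀ f w, w ∈ fm f ↔ f ∈ wm w

/-- A preference profile: one preference for each firm and each worker. -/
structure Profile where
  fp : F → Pref W
  wp : W → Pref F

variable {F W}

/-- All agents' preferences are substitutable. -/
def Profile.Substitutable (P : Profile F W) : Prop :=
  (∀ f, (P.fp f).Substitutable) ∧ (∀ w, (P.wp w).Substitutable)

/-- All agents' preferences satisfy the law of aggregate demand. -/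
def Profile.LAD (P : Profile F W) : Prop :=
  (∀ f, (P.fp f).LAD) ∧ (∀ w, (P.wp w).LAD)

/-- The profile obtained from `P` by replacing firm `f`'s preference by `p`. -/
def Profile.updateFirm (P : Profile F W) (f : F) (p : Pref W) : Profile F W :=
  ⟨Function.update P.fp f p, P.wp⟩

/-- The profile obtained from `P` by replacing worker `w`'s preference by `p`. -/
def Profile.updateWorker (P : Profile F W) (w : W) (p : Pref F) : Profile F W :=
  ⟨P.fp, Function.update P.wp w p⟩

/-- Individual rationality: every agent chooses its whole assignment. -/
def IndRational (P : Profile F W) (μ : Matching F W) : Prop :=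
  (∀ f, (P.fp f).Ch (μ.fm f) = μ.fm f) ∧ (∀ w, (P.wp w).Ch (μ.wm w) = μ.wm w)

/-- The pair `(w, f)` blocks the matching `μ`. -/
def Blocks (P : Profile F W) (μ : Matching F W) (w : W) (f : F) : Prop :=
  w ∉ μ.fm f ∧ w ∈ (P.fp f).Ch (insert w (μ.fm f)) ∧ f ∈ (P.wp w).Ch (insert f (μ.wm w))

/-- (Pairwise) stability. -/
def Stable (P : Profile F W) (μ : Matching F W) : Prop :=
  IndRational P μ ∧ ∀ w f, ¬ Blocks P μ w f

/-- `μF` is the firm-optimal stable matching for `P`. -/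
def FirmOptimal (P : Profile F W) (μF : Matching F W) : Prop :=
  Stable P μF ∧ ∀ μ, Stable P μ → ∀ f, μF.fm f = μ.fm f ∨ (P.fp f).gt (μF.fm f) (μ.fm f)

/-- `μW` is the worker-optimal stable matching for `P`. -/
def WorkerOptimal (P : Profile F W) (μW : Matching F W) : Prop :=
  Stable P μW ∧ ∀ μ, Stable P μ → ∀ w, μW.wm w = μ.wm w ∨ (P.wp w).gt (μW.wm w) (μ.wm w)

/-- Firm `f` satisfies the manipulability property (w.r.t. the rule `h`, the true
profile `P` and the firm-optimal stable matching `μF`): if `h(≻)(f) ≠ μF(≻)(f)`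
then some report `≻'_f` (in the domain: substitutable and LAD) gives `f` a
strictly `≻_f`-better assignment. -/
def FirmManip (h : Profile F W → Matching F W) (P : Profile F W)
    (μF : Matching F W) (f : F) : Prop :=
  (h P).fm f ≠ μF.fm f → ∃ p' : Pref W, p'.Substitutable ∧ p'.LAD ∧
    (P.fp f).gt ((h (P.updateFirm f p')).fm f) ((h P).fm f)

/-- Firm `f` satisfies the manipulability property with Blair order. -/
def FirmManipB (h : Profile F W → Matching F W) (P : Profile F W)
    (μF : Matching F W) (f : F) : Prop :=
  (h P).fm f ≠ μF.fm f → ∃ p' : Pref W, p'.Substitutable ∧ p'.LAD ∧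
    ((P.fp f).Ch ((h (P.updateFirm f p')).fm f ∪ (h P).fm f) = (h (P.updateFirm f p')).fm f ∧
      (h (P.updateFirm f p')).fm f ≠ (h P).fm f)

/-- Worker `w` satisfies the manipulability property. -/
def WorkerManip (h : Profile F W → Matching F W) (P : Profile F W)
    (μW : Matching F W) (w : W) : Prop :=
  (h P).wm w ≠ μW.wm w → ∃ p' : Pref F, p'.Substitutable ∧ p'.LAD ∧
    (P.wp w).gt ((h (P.updateWorker w p')).wm w) ((h P).wm w)

/-- Worker `w` satisfies the manipulability property with Blair order. -/
def WorkerManipB (h : Profile F W → Matching F W) (P : Profile F W)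
    (μW : Matching F W) (w : W) : Prop :=
  (h P).wm w ≠ μW.wm w → ∃ p' : Pref F, p'.Substitutable ∧ p'.LAD ∧
    ((P.wp w).Ch ((h (P.updateWorker w p')).wm w ∪ (h P).wm w) = (h (P.updateWorker w p')).wm w ∧
      (h (P.updateWorker w p')).wm w ≠ (h P).wm w)

/-!
Restricting `f`'s preference to `μ(f)` keeps the market substitutable and LAD, keeps `μ` stable,
and forces every stable matching to give `f` a subset of `μ(f)`. By the rural hospitals theorem
`f` has the same number of partners in all stable matchings of the restricted market, so
`h(≻'')(f)` is all of `μ(f)`.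

The rural hospitals theorem is proved with the Hatfield–Milgrom operator on sets of contracts.
Each stable matching `ν` yields a fixed point `X_ν` of it, so its least fixed point `X` lies below
every `X_ν`, and the contracts the firms choose from `X` are exactly those the workers choose from
the companion set `Y ⊇ Y_ν`. By the law of aggregate demand each firm then gets at most
`|ν(f)|` of them and each worker at least `|ν(w)|`; both sides count the same contracts, so
every inequality is an equality.
-/

namespace Pref

variable {α : Type*} [DecidableEq α] [Fintype α]

instance (p : Pref α) : IsStrictTotalOrder (Finset α) p.gt := p.isSTO

theorem Ch_subset (p : Pref α) (S : Finset α) : p.Ch S ⊆ S := by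
  classical
  unfold Ch
  simpa using @Finset.max'_mem _ (linearOrderOfSTO (Function.swap p.gt)) S.powerset
    ⟨∅, Finset.empty_mem_powerset S⟩

theorem eq_Ch_or_Ch_gt (p : Pref α) {S A : Finset α} (hA : A ⊆ S) :
    A = p.Ch S ∨ p.gt (p.Ch S) A := by
  classical
  unfold Ch
  exact @Finset.le_max' _ (linearOrderOfSTO (Function.swap p.gt)) S.powerset A
    (Finset.mem_powerset.mpr hA)

theorem Ch_eq_of_forall_gt (p : Pref α) {S A : Finset α} (hA : A ⊆ S)
    (hmax : ∀ B ⊆ S, B ≠ A → p.gt A B) : p.Ch S = A := by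
  by_contra hne
  rcases p.eq_Ch_or_Ch_gt hA with h | h
  · exact hne h.symm
  · exact asymm h (hmax _ (p.Ch_subset S) hne)

theorem Ch_eq_Ch_of_Ch_subset (p : Pref α) {S S' : Finset α} (h1 : p.Ch S' ⊆ S)
    (h2 : S ⊆ S') : p.Ch S = p.Ch S' :=
  p.Ch_eq_of_forall_gt h1 fun _ hB hne =>
    (p.eq_Ch_or_Ch_gt (hB.trans h2)).resolve_left hne

theorem Substitutable.mem_Ch_of_subset {p : Pref α} (hp : p.Substitutable) {S S' : Finset α}
    {w : α} (hss : S ⊆ S') (hw : w ∈ S) (hch : w ∈ p.Ch S') : w ∈ p.Ch S := by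
  suffices key : ∀ D : Finset α, w ∈ p.Ch (S ∪ D) → w ∈ p.Ch S by
    exact key S' (by rwa [Finset.union_eq_right.mpr hss])
  intro D
  induction D using Finset.induction_on with
  | empty => simp
  | @insert a D haD ih =>
    intro hwD
    by_cases haS : a ∈ S
    · rw [Finset.union_insert, Finset.insert_eq_of_mem (Finset.mem_union_left D haS)] at hwD
      exact ih hwD
    · have hmem : w ∈ p.Ch ((S ∪ insert a D).erase a) :=
        hp _ w a (Finset.mem_union_left _ hw) (by simp) (ne_of_mem_of_not_mem hw haS) hwD
      rw [Finset.union_insert, Finset.erase_insert (by simp [haS, haD])] at hmem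
      exact ih hmem

theorem Substitutable.Ch_union_eq {p : Pref α} (hp : p.Substitutable) {S S' : Finset α}
    (hS : p.Ch S = S) (hrej : ∀ x ∈ S', x ∉ S → x ∉ p.Ch (insert x S)) :
    p.Ch (S ∪ S') = S := by
  have hsub : p.Ch (S ∪ S') ⊆ S := by
    intro x hx
    by_contra hxS
    have hxS' : x ∈ S' := (Finset.mem_union.mp (p.Ch_subset _ hx)).resolve_left hxS
    refine hrej x hxS' hxS (hp.mem_Ch_of_subset ?_ (Finset.mem_insert_self x S) hx)
    exact Finset.insert_subset (Finset.mem_union_right S hxS') Finset.subset_union_left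
  exact (p.Ch_eq_Ch_of_Ch_subset hsub Finset.subset_union_left).symm.trans hS

end Pref

namespace IsRestriction

variable {α : Type*} [DecidableEq α] [Fintype α] {p p' : Pref α} {T : Finset α}

theorem Ch_eq (hres : IsRestriction p T p') (S : Finset α) : p'.Ch S = p.Ch (S ∩ T) := by
  set A := p.Ch (S ∩ T)
  have hA : A ⊆ S ∩ T := p.Ch_subset _
  have hAT : A ⊆ T := hA.trans Finset.inter_subset_right
  refine p'.Ch_eq_of_forall_gt (hA.trans Finset.inter_subset_left) fun B hB hne => ?_
  by_cases hBT : B ⊆ T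
  · exact (hres.2.2 A B hAT hBT).mpr
      ((p.eq_Ch_or_Ch_gt (Finset.subset_inter hB hBT)).resolve_left hne)
  · rcases eq_or_ne A ∅ with hA0 | hA0
    · rw [hA0]
      exact hres.1 B hBT
    · have hA_gt : p.gt A ∅ :=
        (p.eq_Ch_or_Ch_gt (Finset.empty_subset _)).resolve_left (Ne.symm hA0)
      exact _root_.trans ((hres.2.1 A hAT).mpr hA_gt) (hres.1 B hBT)

theorem Ch_subset (hres : IsRestriction p T p') (S : Finset α) : p'.Ch S ⊆ T := by
  rw [hres.Ch_eq]
  exact (p.Ch_subset _).trans Finset.inter_subset_right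

theorem Ch_eq_of_subset (hres : IsRestriction p T p') {S : Finset α} (hTS : T ⊆ S) :
    p'.Ch S = p.Ch T := by
  rw [hres.Ch_eq, Finset.inter_eq_right.mpr hTS]

theorem substitutable (hres : IsRestriction p T p') (hp : p.Substitutable) :
    p'.Substitutable := by
  intro S w w' hw hw' hne hch
  rw [hres.Ch_eq] at hch ⊢
  have hset : S.erase w' ∩ T = (S ∩ T).erase w' := by
    ext x
    simp only [Finset.mem_inter, Finset.mem_erase]
    tauto
  rw [hset]
  by_cases hw'T : w' ∈ S ∩ T
  · exact hp (S ∩ T) w w' (p.Ch_subset _ hch) hw'T hne hch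
  · rwa [Finset.erase_eq_of_notMem hw'T]

theorem lad (hres : IsRestriction p T p') (hp : p.LAD) : p'.LAD := by
  intro Y X hYX
  rw [hres.Ch_eq, hres.Ch_eq]
  exact hp _ _ (Finset.inter_subset_inter_right hYX)

end IsRestriction

section Contracts

variable {F W : Type*}

open scoped Classical in
noncomputable def firmSection [Fintype W] (X : Set (F × W)) (f : F) : Finset W :=
  Finset.univ.filter fun w => (f, w) ∈ X

open scoped Classical in
noncomputable def workerSection [Fintype F] (X : Set (F × W)) (w : W) : Finset F :=
  Finset.univ.filter fun f => (f, w) ∈ X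

@[simp] theorem mem_firmSection [Fintype W] {X : Set (F × W)} {f : F} {w : W} :
    w ∈ firmSection X f ↔ (f, w) ∈ X := by
  simp [firmSection]

@[simp] theorem mem_workerSection [Fintype F] {X : Set (F × W)} {f : F} {w : W} :
    f ∈ workerSection X w ↔ (f, w) ∈ X := by
  simp [workerSection]

theorem firmSection_mono [Fintype W] {X X' : Set (F × W)} (h : X ⊆ X') (f : F) :
    firmSection X f ⊆ firmSection X' f :=
  fun _ hw => mem_firmSection.mpr (h (mem_firmSection.mp hw))

theorem workerSection_mono [Fintype F] {X X' : Set (F × W)} (h : X ⊆ X') (w : W) :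
    workerSection X w ⊆ workerSection X' w :=
  fun _ hf => mem_workerSection.mpr (h (mem_workerSection.mp hf))

theorem sum_card_firmSection [Fintype F] [Fintype W] (X : Set (F × W)) :
    ∑ f, (firmSection X f).card = ∑ w, (workerSection X w).card := by
  classical
  simp only [firmSection, workerSection, Finset.card_filter]
  exact Finset.sum_comm

end Contracts

section Market

set_option linter.unusedSectionVars false

variable {F W : Type*} [DecidableEq F] [Fintype F] [DecidableEq W] [Fintype W]

namespace Profile

theorem Substitutable.updateFirm {P : Profile F W} (hP : P.Substitutable) (f : F)
    {p : Pref W} (hp : p.Substitutable) : (P.updateFirm f p).Substitutable := by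
  refine ⟨fun g => ?_, hP.2⟩
  rcases eq_or_ne g f with rfl | hg
  · simpa [Profile.updateFirm] using hp
  · simpa [Profile.updateFirm, hg] using hP.1 g

theorem LAD.updateFirm {P : Profile F W} (hP : P.LAD) (f : F) {p : Pref W} (hp : p.LAD) :
    (P.updateFirm f p).LAD := by
  refine ⟨fun g => ?_, hP.2⟩
  rcases eq_or_ne g f with rfl | hg
  · simpa [Profile.updateFirm] using hp
  · simpa [Profile.updateFirm, hg] using hP.1 g

end Profile

theorem Stable.updateFirm_of_isRestriction {P : Profile F W} {μ : Matching F W}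
    (hμ : Stable P μ) {f : F} {p : Pref W} (hres : IsRestriction (P.fp f) (μ.fm f) p) :
    Stable (P.updateFirm f p) μ := by
  refine ⟨⟨fun g => ?_, hμ.1.2⟩, fun w g ⟨hw, hfirm, hworker⟩ => ?_⟩
  · rcases eq_or_ne g f with rfl | hg
    · simpa [Profile.updateFirm, hres.Ch_eq_of_subset subset_rfl] using hμ.1.1 g
    · simpa [Profile.updateFirm, hg] using hμ.1.1 g
  · rcases eq_or_ne g f with rfl | hg
    · simp only [Profile.updateFirm, Function.update_self,
        hres.Ch_eq_of_subset (Finset.subset_insert w _), hμ.1.1 g] at hfirm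
      exact hw hfirm
    · simp only [Profile.updateFirm, Function.update_of_ne hg] at hfirm
      exact hμ.2 w g ⟨hw, hfirm, hworker⟩

def Matching.contracts (μ : Matching F W) : Set (F × W) := {z | z.2 ∈ μ.fm z.1}

@[simp] theorem Matching.firmSection_contracts (μ : Matching F W) (f : F) :
    firmSection μ.contracts f = μ.fm f := by
  ext w
  simp [Matching.contracts]

@[simp] theorem Matching.workerSection_contracts (μ : Matching F W) (w : W) :
    workerSection μ.contracts w = μ.wm w := by
  ext f
  simp [Matching.contracts, μ.compat]

namespace Profile

variable (P : Profile F W)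

def firmChosen (X : Set (F × W)) : Set (F × W) :=
  {z ∈ X | z.2 ∈ (P.fp z.1).Ch (firmSection X z.1)}

def workerChosen (Y : Set (F × W)) : Set (F × W) :=
  {z ∈ Y | z.1 ∈ (P.wp z.2).Ch (workerSection Y z.2)}

def firmRejected (X : Set (F × W)) : Set (F × W) :=
  {z ∈ X | z.2 ∉ (P.fp z.1).Ch (firmSection X z.1)}

def workerRejected (Y : Set (F × W)) : Set (F × W) :=
  {z ∈ Y | z.1 ∉ (P.wp z.2).Ch (workerSection Y z.2)}

theorem firmSection_firmChosen (X : Set (F × W)) (f : F) :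
    firmSection (P.firmChosen X) f = (P.fp f).Ch (firmSection X f) := by
  ext w
  simp only [mem_firmSection, firmChosen, Set.mem_ofPred_eq, and_iff_right_iff_imp]
  exact fun hw => mem_firmSection.mp ((P.fp f).Ch_subset _ hw)

theorem workerSection_workerChosen (Y : Set (F × W)) (w : W) :
    workerSection (P.workerChosen Y) w = (P.wp w).Ch (workerSection Y w) := by
  ext f
  simp only [mem_workerSection, workerChosen, Set.mem_ofPred_eq, and_iff_right_iff_imp]
  exact fun hf => mem_workerSection.mp ((P.wp w).Ch_subset _ hf)

theorem firmChosen_eq_inter (X : Set (F × W)) : P.firmChosen X = X ∩ (P.firmRejected X)ᶜ := by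
  ext z
  simp only [firmChosen, firmRejected, Set.mem_ofPred_eq, Set.mem_inter_iff, Set.mem_compl_iff]
  tauto

theorem workerChosen_eq_inter (Y : Set (F × W)) :
    P.workerChosen Y = Y ∩ (P.workerRejected Y)ᶜ := by
  ext z
  simp only [workerChosen, workerRejected, Set.mem_ofPred_eq, Set.mem_inter_iff,
    Set.mem_compl_iff]
  tauto

variable {P}

theorem firmRejected_mono (hsub : ∀ f, (P.fp f).Substitutable) {X X' : Set (F × W)}
    (h : X ⊆ X') : P.firmRejected X ⊆ P.firmRejected X' := by
  rintro ⟨f, w⟩ ⟨hzX, hrej⟩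
  exact ⟨h hzX, fun hch => hrej
    ((hsub f).mem_Ch_of_subset (firmSection_mono h f) (mem_firmSection.mpr hzX) hch)⟩

theorem workerRejected_mono (hsub : ∀ w, (P.wp w).Substitutable) {Y Y' : Set (F × W)}
    (h : Y ⊆ Y') : P.workerRejected Y ⊆ P.workerRejected Y' := by
  rintro ⟨f, w⟩ ⟨hzY, hrej⟩
  exact ⟨h hzY, fun hch => hrej
    ((hsub w).mem_Ch_of_subset (workerSection_mono h w) (mem_workerSection.mpr hzY) hch)⟩

variable (P)

def hatfieldMilgrom (hsub : P.Substitutable) : Set (F × W) →o Set (F × W) where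
  toFun X := (P.workerRejected (P.firmRejected X)ᶜ)ᶜ
  monotone' _ _ h := Set.compl_subset_compl.mpr
    (workerRejected_mono hsub.2 (Set.compl_subset_compl.mpr (firmRejected_mono hsub.1 h)))

def firmOptions (μ : Matching F W) : Set (F × W) :=
  μ.contracts ∪ {z | z.2 ∉ μ.fm z.1 ∧ z.1 ∈ (P.wp z.2).Ch (insert z.1 (μ.wm z.2))}

def workerOptions (μ : Matching F W) : Set (F × W) :=
  μ.contracts ∪ {z | z.2 ∉ μ.fm z.1 ∧ z.1 ∉ (P.wp z.2).Ch (insert z.1 (μ.wm z.2))}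

variable {P}

theorem Ch_firmSection_firmOptions (hsub : P.Substitutable) {μ : Matching F W}
    (hμ : Stable P μ) (f : F) : (P.fp f).Ch (firmSection (P.firmOptions μ) f) = μ.fm f := by
  have hsec : firmSection (P.firmOptions μ) f = μ.fm f ∪ Finset.univ.filter
      (fun w => w ∉ μ.fm f ∧ f ∈ (P.wp w).Ch (insert f (μ.wm w))) := by
    ext w
    simp [firmOptions, Matching.contracts]
  rw [hsec]
  refine (hsub.1 f).Ch_union_eq (hμ.1.1 f) fun w hw hwμ hch => hμ.2 w f ⟨hwμ, hch, ?_⟩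
  exact (Finset.mem_filter.mp hw).2.2

theorem Ch_workerSection_workerOptions (hsub : P.Substitutable) {μ : Matching F W}
    (hμ : IndRational P μ) (w : W) :
    (P.wp w).Ch (workerSection (P.workerOptions μ) w) = μ.wm w := by
  have hsec : workerSection (P.workerOptions μ) w = μ.wm w ∪ Finset.univ.filter
      (fun f => f ∉ μ.wm w ∧ f ∉ (P.wp w).Ch (insert f (μ.wm w))) := by
    ext f
    simp [workerOptions, Matching.contracts, μ.compat]
  rw [hsec]
  exact (hsub.2 w).Ch_union_eq (hμ.2 w) fun f hf _ => (Finset.mem_filter.mp hf).2.2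

theorem compl_firmRejected_firmOptions (hsub : P.Substitutable) {μ : Matching F W}
    (hμ : Stable P μ) : (P.firmRejected (P.firmOptions μ))ᶜ = P.workerOptions μ := by
  ext ⟨f, w⟩
  simp only [firmRejected, Set.mem_compl_iff, Set.mem_ofPred_eq,
    Ch_firmSection_firmOptions hsub hμ f]
  simp only [firmOptions, workerOptions, Matching.contracts, Set.mem_ofPred_eq, Set.mem_union]
  tauto

theorem compl_workerRejected_workerOptions (hsub : P.Substitutable) {μ : Matching F W}
    (hμ : Stable P μ) : (P.workerRejected (P.workerOptions μ))ᶜ = P.firmOptions μ := by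
  ext ⟨f, w⟩
  simp only [workerRejected, Set.mem_compl_iff, Set.mem_ofPred_eq,
    Ch_workerSection_workerOptions hsub hμ.1 w, ← μ.compat]
  simp only [firmOptions, workerOptions, Matching.contracts, Set.mem_ofPred_eq, Set.mem_union]
  tauto

theorem hatfieldMilgrom_firmOptions (hsub : P.Substitutable) {μ : Matching F W}
    (hμ : Stable P μ) : P.hatfieldMilgrom hsub (P.firmOptions μ) = P.firmOptions μ := by
  change (P.workerRejected (P.firmRejected (P.firmOptions μ))ᶜ)ᶜ = P.firmOptions μ
  rw [compl_firmRejected_firmOptions hsub hμ, compl_workerRejected_workerOptions hsub hμ]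

theorem card_fm_eq_card_firmChosen_lfp (hsub : P.Substitutable) (hlad : P.LAD)
    {μ : Matching F W} (hμ : Stable P μ) (f : F) :
    (μ.fm f).card =
      (firmSection (P.firmChosen (OrderHom.lfp (P.hatfieldMilgrom hsub))) f).card := by
  set X := OrderHom.lfp (P.hatfieldMilgrom hsub)
  set Y := (P.firmRejected X)ᶜ
  set A := P.firmChosen X
  have hX : X = (P.workerRejected Y)ᶜ := (OrderHom.map_lfp (P.hatfieldMilgrom hsub)).symm
  have hXμ : X ⊆ P.firmOptions μ :=
    OrderHom.lfp_le_fixed _ (hatfieldMilgrom_firmOptions hsub hμ)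
  have hYμ : P.workerOptions μ ⊆ Y := by
    rw [← compl_firmRejected_firmOptions hsub hμ]
    exact Set.compl_subset_compl.mpr (firmRejected_mono hsub.1 hXμ)
  have hA : A = P.workerChosen Y := by
    rw [workerChosen_eq_inter, ← hX, Set.inter_comm]
    exact firmChosen_eq_inter P X
  have hfirm : ∀ g, (firmSection A g).card ≤ (μ.fm g).card := fun g => by
    rw [firmSection_firmChosen, ← Ch_firmSection_firmOptions hsub hμ g]
    exact hlad.1 g _ _ (firmSection_mono hXμ g)
  have hworker : ∀ w, (μ.wm w).card ≤ (workerSection A w).card := fun w => by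
    rw [hA, workerSection_workerChosen, ← Ch_workerSection_workerOptions hsub hμ.1 w]
    exact hlad.2 w _ _ (workerSection_mono hYμ w)
  have hsum : ∑ g, (μ.fm g).card ≤ ∑ g, (firmSection A g).card :=
    calc ∑ g, (μ.fm g).card = ∑ w, (μ.wm w).card := by
          simpa using sum_card_firmSection μ.contracts
      _ ≤ ∑ w, (workerSection A w).card := Finset.sum_le_sum fun w _ => hworker w
      _ = ∑ g, (firmSection A g).card := (sum_card_firmSection A).symm
  have hsum_eq := le_antisymm (Finset.sum_le_sum fun g _ => hfirm g) hsum
  exact ((Finset.sum_eq_sum_iff_of_le fun g _ => hfirm g).mp hsum_eq f (Finset.mem_univ f)).symm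

/-- The rural hospitals theorem. -/
theorem card_fm_eq_of_stable (hsub : P.Substitutable) (hlad : P.LAD) {μ ν : Matching F W}
    (hμ : Stable P μ) (hν : Stable P ν) (f : F) : (μ.fm f).card = (ν.fm f).card :=
  (card_fm_eq_card_firmChosen_lfp hsub hlad hμ f).trans
    (card_fm_eq_card_firmChosen_lfp hsub hlad hν f).symm

end Profile

end Market

/-- Proposition 2 of the paper.  With substitutable and LAD
preferences, if `h` is a stable matching rule, `μ` is stable for `(F, W, ≻)`,
`f ∈ F`, and `≻'' = (≻_{-f}, ≻_f|_{μ(f)})`, then `h(≻'')(f) = μ(f)`. -/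
theorem stmt3 {F W : Type*} [DecidableEq F] [Fintype F] [DecidableEq W] [Fintype W]
    (P : Profile F W) (hsub : P.Substitutable) (hlad : P.LAD)
    (h : Profile F W → Matching F W)
    (hrule : ∀ P' : Profile F W, P'.Substitutable → P'.LAD → Stable P' (h P'))
    (f : F) (μ : Matching F W) (hμ : Stable P μ)
    (p'' : Pref W) (hres : IsRestriction (P.fp f) (μ.fm f) p'') :
    (h (P.updateFirm f p'')).fm f = μ.fm f := by
  have hsub'' := hsub.updateFirm f (hres.substitutable (hsub.1 f))
  have hlad'' := hlad.updateFirm f (hres.lad (hlad.1 f))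
  have hν := hrule _ hsub'' hlad''
  have hν_subset : (h (P.updateFirm f p'')).fm f ⊆ μ.fm f := by
    rw [← hν.1.1 f]
    simpa [Profile.updateFirm] using hres.Ch_subset _
  refine Finset.eq_of_subset_of_card_le hν_subset (le_of_eq ?_)
  exact Profile.card_fm_eq_of_stable hsub'' hlad'' (hμ.updateFirm_of_isRestriction hres) hν f
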